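/- arXiv:2312.07704 — 2 statements merged into one kernel-verified Lean document; each statement's English description precedes it below -/
import Mathlib

section
/- Let Y₁ and Y₂ be independent real random variables on a probability space such that Y₁ has probability density f_{m₁,ν₁} and Y₂ has probability density f_{m₂,ν₂} (with respect to Lebesgue measure), where m₁, m₂, ν₁, ν₂ > 0. Then the pair (U, W) = (Y₁ + Y₂, Y₁/(Y₁ + Y₂)) has joint probability density (with respect to two-dimensional Lebesgue measure) equal to h(u,w) = K₀ · u^{(m₁+m₂)/2−1} · w^{m₁/2−1} · (1−w)^{m₂/2−1} · (1 + m₁uw/ν₁)^{−(m₁+ν₁)/2} · (1 + m₂u(1−w)/ν₂)^{−(m₂+ν₂)/2} for u > 0 and 0 < w < 1, and 0 elsewhere, where K₀ = (m₁/ν₁)^{m₁/2}(m₂/ν₂)^{m₂/2} / (B(m₁/2, ν₁/2) · B(m₂/2, ν₂/2)). -/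
open Real MeasureTheory Set ProbabilityTheory

/-- Beta function `B(a,b) = Γ(a)Γ(b)/Γ(a+b)`. -/
noncomputable def Beta (a b : ℝ) : ℝ := Gamma a * Gamma b / Gamma (a + b)

/-- The Fisher–Snedecor F-density with `m` numerator and `ν` denominator degrees of freedom. -/
noncomputable def fDens (m ν : ℝ) (y : ℝ) : ℝ :=
  if 0 < y then
    (1 / Beta (m / 2) (ν / 2)) * (m / ν) ^ (m / 2) * y ^ (m / 2 - 1) *
      (1 + m * y / ν) ^ (-(m + ν) / 2)
  else 0

/-- The joint density `h(u,w)` of `(U, W) = (Y₁ + Y₂, Y₁/(Y₁+Y₂))`. -/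
noncomputable def hDens (m₁ m₂ ν₁ ν₂ : ℝ) (u w : ℝ) : ℝ :=
  if 0 < u ∧ 0 < w ∧ w < 1 then
    ((m₁ / ν₁) ^ (m₁ / 2) * (m₂ / ν₂) ^ (m₂ / 2) /
        (Beta (m₁ / 2) (ν₁ / 2) * Beta (m₂ / 2) (ν₂ / 2))) *
      u ^ ((m₁ + m₂) / 2 - 1) * w ^ (m₁ / 2 - 1) * (1 - w) ^ (m₂ / 2 - 1) *
      (1 + m₁ * u * w / ν₁) ^ (-(m₁ + ν₁) / 2) *
      (1 + m₂ * u * (1 - w) / ν₂) ^ (-(m₂ + ν₂) / 2)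
  else 0

/-!
Write `(Y₁, Y₂) = S (U, W)` with `S (u, w) = (u w, u (1 - w))`, a bijection from
`(0, ∞) × (0, 1)` onto the open quadrant with Jacobian determinant `-u`. By independence
`(Y₁, Y₂)` has the product density `f₁(y₁) f₂(y₂)`, which vanishes off the quadrant, so the change
of variables formula gives `(U, W)` the density `u f₁(u w) f₂(u (1 - w))` on `(0, ∞) × (0, 1)`,
and this is `h(u, w)`.
-/

open scoped ENNReal

theorem map_withDensity_eq_withDensity_of_leftInvOn {E : Type*} [NormedAddCommGroup E]
    [NormedSpace ℝ E] [FiniteDimensional ℝ E] [MeasurableSpace E] [BorelSpace E]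
    (μ : Measure E) [μ.IsAddHaarMeasure] {S T : E → E} {S' : E → E →L[ℝ] E} {t : Set E}
    {F : E → ℝ≥0∞} (ht : MeasurableSet t)
    (hS' : ∀ x ∈ t, HasFDerivWithinAt S (S' x) t x) (hS : InjOn S t) (hT : Measurable T)
    (hTS : LeftInvOn T S t) (hF : ∀ y ∉ S '' t, F y = 0) :
    (μ.withDensity F).map T =
      μ.withDensity (t.indicator fun x => ENNReal.ofReal |(S' x).det| * F (S x)) := by
  have hSt : MeasurableSet (S '' t) := measurable_image_of_fderivWithin ht hS' hS
  have hF_ind : (S '' t).indicator F = F := indicator_eq_self.2 fun y hy =>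
    not_imp_comm.1 (hF y) hy
  ext A hA
  -- on `S '' t`, the preimage `T ⁻¹' A` is `S '' (A ∩ t)` since `T` inverts `S` there
  rw [Measure.map_apply hT hA, withDensity_apply _ (hT hA), withDensity_apply _ hA,
    setLIntegral_indicator ht, ← hF_ind, setLIntegral_indicator hSt, inter_comm,
    ← hTS.image_inter', inter_comm]
  simp_rw [hF_ind]
  exact lintegral_image_eq_lintegral_abs_det_fderiv_mul μ (ht.inter hA)
    (fun x hx => (hS' x hx.1).mono inter_subset_left) (hS.mono inter_subset_left) F

theorem ProbabilityTheory.IndepFun.map_prodMk_eq_withDensity {Ω α β : Type*}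
    {mΩ : MeasurableSpace Ω} {mα : MeasurableSpace α} {mβ : MeasurableSpace β} {P : Measure Ω}
    [IsFiniteMeasure P] {μ : Measure α} {ν : Measure β} [SFinite ν] {X : Ω → α} {Y : Ω → β}
    {f : α → ℝ≥0∞} {g : β → ℝ≥0∞} (hXY : IndepFun X Y P) (hX : Measurable X) (hY : Measurable Y)
    (hf : Measurable f) (hg : Measurable g) (hPX : P.map X = μ.withDensity f)
    (hPY : P.map Y = ν.withDensity g) :
    P.map (fun ω => (X ω, Y ω)) = (μ.prod ν).withDensity fun z => f z.1 * g z.2 := by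
  rw [(indepFun_iff_map_prod_eq_prod_map_map hX.aemeasurable hY.aemeasurable).1 hXY, hPX, hPY,
    prod_withDensity hf hg]

noncomputable def sumRatio (p : ℝ × ℝ) : ℝ × ℝ := (p.1 + p.2, p.1 / (p.1 + p.2))

noncomputable def sumRatioInv (q : ℝ × ℝ) : ℝ × ℝ := (q.1 * q.2, q.1 * (1 - q.2))

noncomputable def fderivSumRatioInv (q : ℝ × ℝ) : ℝ × ℝ →L[ℝ] ℝ × ℝ :=
  LinearMap.toContinuousLinearMap
    (Matrix.toLin (Module.Basis.finTwoProd ℝ) (Module.Basis.finTwoProd ℝ)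
      !![q.2, q.1; 1 - q.2, -q.1])

theorem measurable_sumRatio : Measurable sumRatio := by
  unfold sumRatio; fun_prop

theorem hasFDerivAt_sumRatioInv (q : ℝ × ℝ) :
    HasFDerivAt sumRatioInv (fderivSumRatioInv q) q := by
  rw [fderivSumRatioInv, Matrix.toLin_finTwoProd_toContinuousLinearMap]
  have h₁ : HasFDerivAt (fun q : ℝ × ℝ => q.1 * q.2)
      (q.2 • ContinuousLinearMap.fst ℝ ℝ ℝ + q.1 • ContinuousLinearMap.snd ℝ ℝ ℝ) q := by
    rw [add_comm]; exact hasFDerivAt_fst.mul hasFDerivAt_snd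
  have h₂ : HasFDerivAt (fun q : ℝ × ℝ => q.1 * (1 - q.2))
      ((1 - q.2) • ContinuousLinearMap.fst ℝ ℝ ℝ + (-q.1) • ContinuousLinearMap.snd ℝ ℝ ℝ) q := by
    refine (hasFDerivAt_fst.mul
      ((hasFDerivAt_const (1 : ℝ) q).sub hasFDerivAt_snd)).congr_fderiv ?_
    simp only [zero_sub, smul_neg, Pi.sub_apply]
    module
  exact h₁.prodMk h₂

theorem det_fderivSumRatioInv (q : ℝ × ℝ) : (fderivSumRatioInv q).det = -q.1 := by
  rw [fderivSumRatioInv, LinearMap.det_toContinuousLinearMap, LinearMap.det_toLin,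
    Matrix.det_fin_two_of]
  ring

theorem injOn_sumRatioInv : InjOn sumRatioInv {q | q.1 ≠ 0} := by
  rintro ⟨u, w⟩ (hu : u ≠ 0) ⟨u', w'⟩ - h
  simp only [sumRatioInv, Prod.mk.injEq] at h
  obtain rfl : u = u' := by linear_combination h.1 + h.2
  rw [mul_left_cancel₀ hu h.1]

theorem leftInvOn_sumRatio_sumRatioInv : LeftInvOn sumRatio sumRatioInv {q | q.1 ≠ 0} := by
  rintro ⟨u, w⟩ (hu : u ≠ 0)
  have hsum : u * w + u * (1 - w) = u := by ring
  simp only [sumRatio, sumRatioInv, hsum, mul_div_cancel_left₀ w hu]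

theorem sumRatioInv_sumRatio {p : ℝ × ℝ} (hp : p.1 + p.2 ≠ 0) : sumRatioInv (sumRatio p) = p := by
  simp only [sumRatio, sumRatioInv]
  congr 1
  · field_simp
  · field_simp; ring

theorem sumRatio_mem_of_pos {p : ℝ × ℝ} (hx : 0 < p.1) (hy : 0 < p.2) :
    sumRatio p ∈ Ioi 0 ×ˢ Ioo 0 1 :=
  ⟨add_pos hx hy, div_pos hx (add_pos hx hy), (div_lt_one (add_pos hx hy)).2 (by linarith)⟩

theorem mem_image_sumRatioInv_of_pos {p : ℝ × ℝ} (hx : 0 < p.1) (hy : 0 < p.2) :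
    p ∈ sumRatioInv '' (Ioi 0 ×ˢ Ioo 0 1) :=
  ⟨sumRatio p, sumRatio_mem_of_pos hx hy, sumRatioInv_sumRatio (add_pos hx hy).ne'⟩

theorem Beta_pos {a b : ℝ} (ha : 0 < a) (hb : 0 < b) : 0 < Beta a b :=
  div_pos (mul_pos (Gamma_pos_of_pos ha) (Gamma_pos_of_pos hb)) (Gamma_pos_of_pos (add_pos ha hb))

theorem fDens_nonneg {m ν : ℝ} (hm : 0 < m) (hν : 0 < ν) (y : ℝ) : 0 ≤ fDens m ν y := by
  have := Beta_pos (half_pos hm) (half_pos hν)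
  unfold fDens
  split_ifs <;> positivity

theorem measurable_fDens (m ν : ℝ) : Measurable (fDens m ν) :=
  Measurable.ite measurableSet_Ioi (by fun_prop) measurable_const

theorem fDens_of_nonpos {m ν y : ℝ} (hy : y ≤ 0) : fDens m ν y = 0 := if_neg hy.not_gt

theorem ofReal_fDens_mul_ofReal_fDens_of_notMem {m₁ ν₁ m₂ ν₂ : ℝ} {p : ℝ × ℝ}
    (hp : p ∉ sumRatioInv '' (Ioi 0 ×ˢ Ioo 0 1)) :
    ENNReal.ofReal (fDens m₁ ν₁ p.1) * ENNReal.ofReal (fDens m₂ ν₂ p.2) = 0 := by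
  by_cases hx : 0 < p.1
  · by_cases hy : 0 < p.2
    · exact absurd (mem_image_sumRatioInv_of_pos hx hy) hp
    · simp [fDens_of_nonpos (not_lt.1 hy)]
  · simp [fDens_of_nonpos (not_lt.1 hx)]

theorem mul_fDens_mul_fDens_eq_hDens (m₁ m₂ ν₁ ν₂ : ℝ) {u w : ℝ} (hu : 0 < u) (hw : 0 < w)
    (hw₁ : w < 1) :
    u * fDens m₁ ν₁ (u * w) * fDens m₂ ν₂ (u * (1 - w)) = hDens m₁ m₂ ν₁ ν₂ u w := by
  have hw' : 0 < 1 - w := sub_pos.2 hw₁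
  rw [fDens, fDens, hDens, if_pos (mul_pos hu hw), if_pos (mul_pos hu hw'),
    if_pos ⟨hu, hw, hw₁⟩, mul_rpow hu.le hw.le, mul_rpow hu.le hw'.le]
  have hu_pow : u ^ ((m₁ + m₂) / 2 - 1) = u * (u ^ (m₁ / 2 - 1) * u ^ (m₂ / 2 - 1)) := by
    rw [show (m₁ + m₂) / 2 - 1 = m₁ / 2 - 1 + (m₂ / 2 - 1) + 1 by ring, rpow_add_one hu.ne',
      rpow_add hu]
    ring
  rw [hu_pow]
  ring_nf

theorem indicator_abs_det_mul_fDens_eq_hDens {m₁ m₂ ν₁ ν₂ : ℝ} (hm₁ : 0 < m₁) (hν₁ : 0 < ν₁)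
    (q : ℝ × ℝ) :
    (Ioi 0 ×ˢ Ioo 0 1).indicator (fun q => ENNReal.ofReal |(fderivSumRatioInv q).det| *
        (ENNReal.ofReal (fDens m₁ ν₁ (sumRatioInv q).1) *
          ENNReal.ofReal (fDens m₂ ν₂ (sumRatioInv q).2))) q =
      ENNReal.ofReal (hDens m₁ m₂ ν₁ ν₂ q.1 q.2) := by
  obtain ⟨u, w⟩ := q
  by_cases hq : 0 < u ∧ 0 < w ∧ w < 1
  · obtain ⟨hu, hw, hw₁⟩ := hq
    rw [indicator_of_mem (show (u, w) ∈ Ioi 0 ×ˢ Ioo 0 1 from ⟨hu, hw, hw₁⟩),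
      det_fderivSumRatioInv, abs_neg, abs_of_pos hu, ← ENNReal.ofReal_mul (fDens_nonneg hm₁ hν₁ _),
      ← ENNReal.ofReal_mul hu.le, ← mul_assoc]
    exact congrArg ENNReal.ofReal (mul_fDens_mul_fDens_eq_hDens m₁ m₂ ν₁ ν₂ hu hw hw₁)
  · rw [indicator_of_notMem (show (u, w) ∉ Ioi 0 ×ˢ Ioo 0 1 from hq), hDens, if_neg hq,
      ENNReal.ofReal_zero]

theorem joint_density_of_sum_and_ratio_general
    {Ω : Type*} [MeasureSpace Ω] [IsProbabilityMeasure (ℙ : Measure Ω)]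
    (Y₁ Y₂ : Ω → ℝ) (hY₁m : Measurable Y₁) (hY₂m : Measurable Y₂)
    (hindep : IndepFun Y₁ Y₂ ℙ)
    (m₁ m₂ ν₁ ν₂ : ℝ) (hm₁ : 0 < m₁) (hν₁ : 0 < ν₁)
    (hY₁ : Measure.map Y₁ ℙ = volume.withDensity (fun y => ENNReal.ofReal (fDens m₁ ν₁ y)))
    (hY₂ : Measure.map Y₂ ℙ = volume.withDensity (fun y => ENNReal.ofReal (fDens m₂ ν₂ y))) :
    Measure.map (fun ω => (Y₁ ω + Y₂ ω, Y₁ ω / (Y₁ ω + Y₂ ω))) ℙ =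
      (volume : Measure (ℝ × ℝ)).withDensity
        (fun p => ENNReal.ofReal (hDens m₁ m₂ ν₁ ν₂ p.1 p.2)) := by
  have hpair := hindep.map_prodMk_eq_withDensity hY₁m hY₂m
    (measurable_fDens m₁ ν₁).ennreal_ofReal (measurable_fDens m₂ ν₂).ennreal_ofReal hY₁ hY₂
  have hpos : Ioi 0 ×ˢ Ioo 0 1 ⊆ {q : ℝ × ℝ | q.1 ≠ 0} := fun q hq => hq.1.ne'
  calc Measure.map (fun ω => (Y₁ ω + Y₂ ω, Y₁ ω / (Y₁ ω + Y₂ ω))) ℙ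
      = Measure.map sumRatio (Measure.map (fun ω => (Y₁ ω, Y₂ ω)) ℙ) := by
        rw [Measure.map_map measurable_sumRatio (hY₁m.prodMk hY₂m)]; rfl
    _ = _ := by
      rw [hpair, ← Measure.volume_eq_prod, map_withDensity_eq_withDensity_of_leftInvOn volume
        (measurableSet_Ioi.prod measurableSet_Ioo)
        (fun q _ => (hasFDerivAt_sumRatioInv q).hasFDerivWithinAt) (injOn_sumRatioInv.mono hpos)
        measurable_sumRatio (leftInvOn_sumRatio_sumRatioInv.mono hpos)
        fun p hp => ofReal_fDens_mul_ofReal_fDens_of_notMem hp]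
      exact congrArg _ (funext (indicator_abs_det_mul_fDens_eq_hDens hm₁ hν₁))

/-- If `Y₁, Y₂` are independent with F-densities `f_{m₁,ν₁}`, `f_{m₂,ν₂}`, then the pair
`(U, W) = (Y₁ + Y₂, Y₁/(Y₁+Y₂))` has joint density `h(u,w)` with respect to
two-dimensional Lebesgue measure. -/
theorem joint_density_of_sum_and_ratio
    {Ω : Type*} [MeasureSpace Ω] [IsProbabilityMeasure (ℙ : Measure Ω)]
    (Y₁ Y₂ : Ω → ℝ) (hY₁m : Measurable Y₁) (hY₂m : Measurable Y₂)
    (hindep : IndepFun Y₁ Y₂ ℙ)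
    (m₁ m₂ ν₁ ν₂ : ℝ) (hm₁ : 0 < m₁) (hm₂ : 0 < m₂) (hν₁ : 0 < ν₁) (hν₂ : 0 < ν₂)
    (hY₁ : Measure.map Y₁ ℙ = volume.withDensity (fun y => ENNReal.ofReal (fDens m₁ ν₁ y)))
    (hY₂ : Measure.map Y₂ ℙ = volume.withDensity (fun y => ENNReal.ofReal (fDens m₂ ν₂ y))) :
    Measure.map (fun ω => (Y₁ ω + Y₂ ω, Y₁ ω / (Y₁ ω + Y₂ ω))) ℙ =
      (volume : Measure (ℝ × ℝ)).withDensity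
        (fun p => ENNReal.ofReal (hDens m₁ m₂ ν₁ ν₂ p.1 p.2)) :=
  joint_density_of_sum_and_ratio_general Y₁ Y₂ hY₁m hY₂m hindep m₁ m₂ ν₁ ν₂ hm₁ hν₁ hY₁ hY₂
end

section
/- For all real m₁, m₂, ν₁, ν₂ > 0, the function h(u,w) = K₀ · u^{(m₁+m₂)/2−1} · w^{m₁/2−1} · (1−w)^{m₂/2−1} · (1 + m₁uw/ν₁)^{−(m₁+ν₁)/2} · (1 + m₂u(1−w)/ν₂)^{−(m₂+ν₂)/2} is a probability density on (0,∞) × (0,1): ∫₀¹ ∫₀^∞ h(u,w) du dw = 1. -/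
/-!
Writing `f_{m,ν}` for the density of Snedecor's F-distribution, the integrand is
`u · f_{m₁,ν₁}(u w) · f_{m₂,ν₂}(u (1 - w))`. The map `(w, u) ↦ (u w, u (1 - w))` is a diffeomorphism
of `(0,1) × (0,∞)` onto `(0,∞)²` with Jacobian `u`, so the integral equals
`(∫ f_{m₁,ν₁}) · (∫ f_{m₂,ν₂}) = 1`. Each F-density integrates to `1`: the substitution
`u = x / (c (1 - x))` turns `∫₀^∞ u^(s-1) (1 + c u)^(-(s+t)) du` into `c^(-s) B(s, t)`.
-/

open Real MeasureTheory Set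

lemma integral_rpow_mul_one_sub_rpow {a b : ℝ} (ha : 0 < a) (hb : 0 < b) :
    ∫ x in Ioo (0 : ℝ) 1, x ^ (a - 1) * (1 - x) ^ (b - 1) = Beta a b := by
  have h : Complex.betaIntegral a b = ↑(∫ x in (0 : ℝ)..1, x ^ (a - 1) * (1 - x) ^ (b - 1)) := by
    rw [← intervalIntegral.integral_ofReal, Complex.betaIntegral]
    refine intervalIntegral.integral_congr fun x hx => ?_
    rw [uIcc_of_le zero_le_one] at hx
    push_cast [Complex.ofReal_cpow hx.1, Complex.ofReal_cpow (sub_nonneg.2 hx.2)]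
    rfl
  rw [show Beta a b = ProbabilityTheory.beta a b from rfl,
    ProbabilityTheory.beta_eq_betaIntegralReal a b ha hb, h, Complex.ofReal_re,
    intervalIntegral.integral_of_le zero_le_one, integral_Ioc_eq_integral_Ioo]

section BetaPrime

variable {c s t : ℝ}

lemma image_div_mul_one_sub_Ioo (hc : 0 < c) :
    (fun x : ℝ => x / (c * (1 - x))) '' Ioo 0 1 = Ioi 0 := by
  refine Subset.antisymm ?_ fun u (hu : 0 < u) => ?_
  · rintro _ ⟨x, ⟨hx0, hx1⟩, rfl⟩
    exact div_pos hx0 (mul_pos hc (sub_pos.2 hx1))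
  · have hd : 0 < 1 + c * u := by positivity
    refine ⟨c * u / (1 + c * u), ⟨by positivity, by rw [div_lt_one hd]; linarith⟩, ?_⟩
    field_simp
    ring

lemma injOn_div_mul_one_sub (hc : 0 < c) :
    InjOn (fun x : ℝ => x / (c * (1 - x))) (Ioo 0 1) := by
  rintro x ⟨-, hx1⟩ y ⟨-, hy1⟩ h
  have : 1 - x ≠ 0 := (sub_pos.2 hx1).ne'
  have : 1 - y ≠ 0 := (sub_pos.2 hy1).ne'
  field_simp at h
  nlinarith

lemma hasDerivAt_div_mul_one_sub (hc : 0 < c) {x : ℝ} (hx : x ≠ 1) :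
    HasDerivAt (fun x : ℝ => x / (c * (1 - x))) (c / (c * (1 - x)) ^ 2) x := by
  have hne : c * (1 - x) ≠ 0 := mul_ne_zero hc.ne' (sub_ne_zero.2 hx.symm)
  refine ((hasDerivAt_id' x).div (((hasDerivAt_id' x).const_sub 1).const_mul c) hne).congr_deriv
    (by ring)

lemma abs_deriv_smul_div_mul_one_sub (hc : 0 < c) {x : ℝ} (hx : x ∈ Ioo (0 : ℝ) 1) :
    |c / (c * (1 - x)) ^ 2| • ((x / (c * (1 - x))) ^ (s - 1) *
      (1 + c * (x / (c * (1 - x)))) ^ (-(s + t)))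
    = c ^ (-s) * (x ^ (s - 1) * (1 - x) ^ (t - 1)) := by
  obtain ⟨hx0, hx1⟩ := hx
  set y := 1 - x
  have hy : 0 < y := sub_pos.2 hx1
  have hinv : 1 + c * (x / (c * y)) = y⁻¹ := by field_simp; ring
  have hc_pow : c ^ (-s) = c⁻¹ * (c ^ (s - 1))⁻¹ := by
    rw [← rpow_neg_one, ← rpow_neg hc.le, ← rpow_add hc]; ring_nf
  have hy_pow : y ^ (s + t) = y ^ (t - 1) * y ^ (s - 1) * y ^ 2 := by
    rw [← rpow_natCast, ← rpow_add hy, ← rpow_add hy]; push_cast; ring_nf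
  rw [hinv, inv_rpow hy.le, ← rpow_neg hy.le, neg_neg, hy_pow, hc_pow, smul_eq_mul,
    abs_of_pos (by positivity), div_rpow hx0.le (by positivity), mul_rpow hc.le hy.le]
  field_simp

lemma integral_rpow_mul_one_add_mul_rpow (hc : 0 < c) (hs : 0 < s) (ht : 0 < t) :
    ∫ u in Ioi (0 : ℝ), u ^ (s - 1) * (1 + c * u) ^ (-(s + t)) = c ^ (-s) * Beta s t := by
  rw [← image_div_mul_one_sub_Ioo hc, integral_image_eq_integral_abs_deriv_smul measurableSet_Ioo
      (fun x hx => (hasDerivAt_div_mul_one_sub hc hx.2.ne).hasDerivWithinAt)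
      (injOn_div_mul_one_sub hc),
    setIntegral_congr_fun measurableSet_Ioo fun x hx => abs_deriv_smul_div_mul_one_sub hc hx,
    integral_const_mul, integral_rpow_mul_one_sub_rpow hs ht]

end BetaPrime

def splitByFraction (p : ℝ × ℝ) : ℝ × ℝ := (p.2 * p.1, p.2 * (1 - p.1))

lemma image_splitByFraction :
    splitByFraction '' (Ioo 0 1 ×ˢ Ioi 0) = Ioi 0 ×ˢ Ioi 0 := by
  refine Subset.antisymm ?_ fun ⟨x, y⟩ ⟨(hx : 0 < x), (hy : 0 < y)⟩ => ?_
  · rintro _ ⟨⟨w, u⟩, ⟨⟨hw0, hw1⟩, hu : 0 < u⟩, rfl⟩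
    exact ⟨mul_pos hu hw0, mul_pos hu (sub_pos.2 hw1)⟩
  · have hxy : 0 < x + y := by linarith
    refine ⟨(x / (x + y), x + y), ⟨⟨by positivity, by rw [div_lt_one hxy]; linarith⟩, hxy⟩, ?_⟩
    simp only [splitByFraction, Prod.mk.injEq]
    exact ⟨by field_simp, by field_simp; ring⟩

lemma injOn_splitByFraction : InjOn splitByFraction (Ioo 0 1 ×ˢ Ioi 0) := by
  rintro ⟨w, u⟩ ⟨-, hu : 0 < u⟩ ⟨w', u'⟩ - h
  simp only [splitByFraction, Prod.mk.injEq] at h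
  have huu : u = u' := by linarith [h.1, h.2]
  subst huu
  rw [mul_left_cancel₀ hu.ne' h.1]

noncomputable def splitByFractionFDeriv (p : ℝ × ℝ) : ℝ × ℝ →L[ℝ] ℝ × ℝ :=
  LinearMap.toContinuousLinearMap (Matrix.toLin (Module.Basis.finTwoProd ℝ)
    (Module.Basis.finTwoProd ℝ) !![p.2, p.1; -p.2, 1 - p.1])

lemma hasFDerivAt_splitByFraction (p : ℝ × ℝ) :
    HasFDerivAt splitByFraction (splitByFractionFDeriv p) p := by
  rw [splitByFractionFDeriv, Matrix.toLin_finTwoProd_toContinuousLinearMap]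
  have hfst : HasFDerivAt (𝕜 := ℝ) Prod.fst (ContinuousLinearMap.fst ℝ ℝ ℝ) p := hasFDerivAt_fst
  have hsnd : HasFDerivAt (𝕜 := ℝ) Prod.snd (ContinuousLinearMap.snd ℝ ℝ ℝ) p := hasFDerivAt_snd
  convert (hsnd.mul hfst).prodMk (hsnd.mul ((hasFDerivAt_const 1 p).sub hfst)) using 2 <;>
  · ext <;> simp [splitByFraction]

lemma det_splitByFractionFDeriv (p : ℝ × ℝ) : (splitByFractionFDeriv p).det = p.2 := by
  simp only [splitByFractionFDeriv, LinearMap.det_toContinuousLinearMap, LinearMap.det_toLin,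
    Matrix.det_fin_two_of]
  ring

lemma setIntegral_Ioi_prod_Ioi_eq_integral_splitByFraction {E : Type*} [NormedAddCommGroup E]
    [NormedSpace ℝ E] (g : ℝ × ℝ → E) (hg : IntegrableOn g (Ioi 0 ×ˢ Ioi 0)) :
    ∫ q in Ioi 0 ×ˢ Ioi 0, g q =
      ∫ w in Ioo (0 : ℝ) 1, ∫ u in Ioi (0 : ℝ), u • g (u * w, u * (1 - w)) := by
  have hS : MeasurableSet (Ioo (0 : ℝ) 1 ×ˢ Ioi (0 : ℝ)) := measurableSet_Ioo.prod measurableSet_Ioi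
  have hderiv : ∀ p ∈ Ioo (0 : ℝ) 1 ×ˢ Ioi (0 : ℝ),
      HasFDerivWithinAt splitByFraction (splitByFractionFDeriv p) (Ioo 0 1 ×ˢ Ioi 0) p :=
    fun p _ => (hasFDerivAt_splitByFraction p).hasFDerivWithinAt
  have hjac : ∀ p ∈ Ioo (0 : ℝ) 1 ×ˢ Ioi (0 : ℝ),
      |(splitByFractionFDeriv p).det| • g (splitByFraction p) =
        p.2 • g (p.2 * p.1, p.2 * (1 - p.1)) := by
    rintro p ⟨-, hu : 0 < p.2⟩
    rw [det_splitByFractionFDeriv, abs_of_pos hu, splitByFraction]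
  rw [← image_splitByFraction] at hg ⊢
  rw [integral_image_eq_integral_abs_det_fderiv_smul volume hS hderiv injOn_splitByFraction,
    setIntegral_congr_fun hS hjac, Measure.volume_eq_prod, setIntegral_prod]
  rw [← Measure.volume_eq_prod]
  exact ((integrableOn_image_iff_integrableOn_abs_det_fderiv_smul volume hS hderiv
    injOn_splitByFraction g).1 hg).congr_fun hjac hS

noncomputable def fisherDensity (m ν x : ℝ) : ℝ :=
  (m / ν) ^ (m / 2) / Beta (m / 2) (ν / 2) * x ^ (m / 2 - 1) * (1 + m * x / ν) ^ (-(m + ν) / 2)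

lemma integral_fisherDensity {m ν : ℝ} (hm : 0 < m) (hν : 0 < ν) :
    ∫ x in Ioi (0 : ℝ), fisherDensity m ν x = 1 := by
  have hc : 0 < m / ν := div_pos hm hν
  have hB : 0 < Beta (m / 2) (ν / 2) := ProbabilityTheory.beta_pos (half_pos hm) (half_pos hν)
  have hf : fisherDensity m ν = fun x => (m / ν) ^ (m / 2) / Beta (m / 2) (ν / 2) *
      (x ^ (m / 2 - 1) * (1 + m / ν * x) ^ (-(m / 2 + ν / 2))) := by
    ext x
    rw [fisherDensity, mul_assoc, show -(m + ν) / 2 = -(m / 2 + ν / 2) by ring,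
      show 1 + m * x / ν = 1 + m / ν * x by ring]
  rw [hf, integral_const_mul,
    integral_rpow_mul_one_add_mul_rpow hc (half_pos hm) (half_pos hν), rpow_neg hc.le]
  field_simp

lemma integrableOn_fisherDensity {m ν : ℝ} (hm : 0 < m) (hν : 0 < ν) :
    IntegrableOn (fisherDensity m ν) (Ioi 0) :=
  Integrable.of_integral_ne_zero (by rw [integral_fisherDensity hm hν]; exact one_ne_zero)

/-- The joint density `h(u,w)` is a probability density on `(0,∞) × (0,1)`:
`∫₀¹ ∫₀^∞ h(u,w) du dw = 1`. -/
theorem hDens_integrates_to_one (m₁ m₂ ν₁ ν₂ : ℝ)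
    (hm₁ : 0 < m₁) (hm₂ : 0 < m₂) (hν₁ : 0 < ν₁) (hν₂ : 0 < ν₂) :
    ∫ w in Ioo (0 : ℝ) 1, ∫ u in Ioi (0 : ℝ),
      ((m₁ / ν₁) ^ (m₁ / 2) * (m₂ / ν₂) ^ (m₂ / 2) /
          (Beta (m₁ / 2) (ν₁ / 2) * Beta (m₂ / 2) (ν₂ / 2))) *
        u ^ ((m₁ + m₂) / 2 - 1) * w ^ (m₁ / 2 - 1) * (1 - w) ^ (m₂ / 2 - 1) *
        (1 + m₁ * u * w / ν₁) ^ (-(m₁ + ν₁) / 2) *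
        (1 + m₂ * u * (1 - w) / ν₂) ^ (-(m₂ + ν₂) / 2) = 1 := by
  calc _ = ∫ w in Ioo (0 : ℝ) 1, ∫ u in Ioi (0 : ℝ),
        u • (fisherDensity m₁ ν₁ (u * w) * fisherDensity m₂ ν₂ (u * (1 - w))) := by
        refine setIntegral_congr_fun measurableSet_Ioo fun w ⟨hw0, hw1⟩ => ?_
        refine setIntegral_congr_fun measurableSet_Ioi fun u (hu : 0 < u) => ?_
        rw [smul_eq_mul, fisherDensity, fisherDensity, mul_rpow hu.le hw0.le,
          mul_rpow hu.le (sub_pos.2 hw1).le, mul_assoc m₁ u w, mul_assoc m₂ u (1 - w),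
          show (m₁ + m₂) / 2 - 1 = (m₁ / 2 - 1) + (m₂ / 2 - 1) + 1 by ring,
          rpow_add hu, rpow_add hu, rpow_one]
        ring
    _ = ∫ q in Ioi 0 ×ˢ Ioi 0, fisherDensity m₁ ν₁ q.1 * fisherDensity m₂ ν₂ q.2 := by
        refine (setIntegral_Ioi_prod_Ioi_eq_integral_splitByFraction
          (fun q => fisherDensity m₁ ν₁ q.1 * fisherDensity m₂ ν₂ q.2) ?_).symm
        rw [IntegrableOn, Measure.volume_eq_prod, ← Measure.prod_restrict]
        exact (integrableOn_fisherDensity hm₁ hν₁).mul_prod (integrableOn_fisherDensity hm₂ hν₂)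
    _ = 1 := by
        rw [Measure.volume_eq_prod, setIntegral_prod_mul, integral_fisherDensity hm₁ hν₁,
          integral_fisherDensity hm₂ hν₂, mul_one]
end
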